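/- Any solution (u,p) of the mixed Volterra problem satisfies, for a.e. t ∈ J, the integral inequality ‖u(t)‖_𝒱 ≤ (1/α₀)‖f(t)‖_{𝒱'} + (1/β)(1 + ‖a‖/α₀)‖g(t)‖_{𝒬'} + ((‖a‖/α₀)C_{k̃} + C_{k₃}) ∫₀ᵗ ‖u(s)‖_𝒱 ds. -/

import Mathlib

/-!
Fix `t` and put `Kᵢ = ∫₀ᵗ kᵢ(t,s) u(s) ds`. Then `x = u(t) - K₃` solves a static saddle point
problem: `b(x, ·) = g(t)`, and `a(x, v) = ⟨f(t), v⟩ + a(K₁ - K₃, v)` for `v ∈ ker B` (the `p`-terms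
vanish there). Brezzi's stability estimate bounds `‖x‖`: lift `g(t)` to some `w` with
`‖w‖ ≤ ‖g(t)‖/β` using the inf-sup condition, and bound `x - w ∈ ker B` by coercivity. Finally
`‖K₁ - K₃‖ ≤ C_k̃ ∫₀ᵗ ‖u‖` and `‖K₃‖ ≤ C_k₃ ∫₀ᵗ ‖u‖`.
-/

open MeasureTheory Real Set
open scoped ENNReal

noncomputable section

variable {V Q : Type*}
  [NormedAddCommGroup V] [InnerProductSpace ℝ V] [CompleteSpace V]
  [NormedAddCommGroup Q] [InnerProductSpace ℝ Q] [CompleteSpace Q]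

/-- `(u, p)` is a solution of the mixed Volterra problem on `J = [0, T]`:
for a.e. `t ∈ J` and all `(v, q) ∈ 𝒱 × 𝒬`,
`a(u(t),v) + b(v,p(t)) = ⟨f(t),v⟩ + ∫₀ᵗ [k₁(t,s)a(u(s),v) + k₂(t,s)b(v,p(s))] ds` and
`b(u(t),q) = ⟨g(t),q⟩ + ∫₀ᵗ k₃(t,s)b(u(s),q) ds`. -/
def MixedVolterraSol (T : ℝ)
    (a : V →L[ℝ] V →L[ℝ] ℝ) (b : V →L[ℝ] Q →L[ℝ] ℝ)
    (k₁ k₂ k₃ : ℝ → ℝ → ℝ)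
    (f : ℝ → V →L[ℝ] ℝ) (g : ℝ → Q →L[ℝ] ℝ)
    (u : ℝ → V) (p : ℝ → Q) : Prop :=
  ∀ᵐ t ∂(volume.restrict (Icc (0:ℝ) T)),
    (∀ v : V, a (u t) v + b v (p t)
        = f t v + ∫ s in (0:ℝ)..t, (k₁ t s * a (u s) v + k₂ t s * b v (p s))) ∧
    ∀ q : Q, b (u t) q = g t q + ∫ s in (0:ℝ)..t, k₃ t s * b (u s) q

open InnerProductSpace
open scoped RealInnerProductSpace

theorem mul_le_of_mul_sq_le_mul {α c x : ℝ} (hc : 0 ≤ c) (hx : 0 ≤ x) (h : α * x ^ 2 ≤ c * x) :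
    α * x ≤ c := by
  rcases hx.eq_or_lt with rfl | hx
  · simpa using hc
  · exact le_of_mul_le_mul_right (by linarith) hx

theorem exists_preimage_norm_le_div_of_inf_sup (b : V →L[ℝ] Q →L[ℝ] ℝ) {β : ℝ} (hβ : 0 < β)
    (hinfsup : ∀ q : Q, β * ‖q‖ ≤ ‖b.flip q‖) (G : Q →L[ℝ] ℝ) :
    ∃ w : V, b w = G ∧ ‖w‖ ≤ ‖G‖ / β := by
  set S : Q →L[ℝ] V := (toDual ℝ V).symm.toContinuousLinearEquiv.toContinuousLinearMap ∘L b.flip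
  have hS : ∀ q v, ⟪S q, v⟫ = b v q := by simp [S, toDual_symm_apply]
  have hS_norm : ∀ q, β * ‖q‖ ≤ ‖S q‖ := by simpa [S] using hinfsup
  -- Seek `w = S q₀` with `⟪S q₀, S ·⟫ = G`, a Lax–Milgram problem that inf-sup makes coercive.
  have hcoercive : IsCoercive ((innerSL ℝ).bilinearComp S S) := by
    refine ⟨β * β, mul_pos hβ hβ, fun q => ?_⟩
    simp only [ContinuousLinearMap.bilinearComp_apply, innerSL_apply_apply,
      real_inner_self_eq_norm_mul_norm]
    calc β * β * ‖q‖ * ‖q‖ = (β * ‖q‖) * (β * ‖q‖) := by ring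
      _ ≤ ‖S q‖ * ‖S q‖ := mul_self_le_mul_self (by positivity) (hS_norm q)
  set E := hcoercive.continuousLinearEquivOfBilin
  obtain ⟨q₀, hq₀⟩ : ∃ q₀ : Q, ∀ r, ⟪S q₀, S r⟫ = G r :=
    ⟨E.symm ((toDual ℝ Q).symm G), fun r => by
      simpa [E, toDual_symm_apply] using
        (hcoercive.continuousLinearEquivOfBilin_apply (E.symm ((toDual ℝ Q).symm G)) r).symm⟩
  refine ⟨S q₀, ContinuousLinearMap.ext fun r => by rw [← hS, real_inner_comm, hq₀], ?_⟩
  have hsq : β * ‖S q₀‖ ^ 2 ≤ ‖G‖ * ‖S q₀‖ :=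
    calc β * ‖S q₀‖ ^ 2 = β * G q₀ := by rw [← hq₀, real_inner_self_eq_norm_sq]
      _ ≤ β * (‖G‖ * ‖q₀‖) := by gcongr; exact (le_norm_self _).trans (G.le_opNorm q₀)
      _ = ‖G‖ * (β * ‖q₀‖) := by ring
      _ ≤ ‖G‖ * ‖S q₀‖ := by gcongr; exact hS_norm q₀
  rw [le_div_iff₀ hβ, mul_comm]
  exact mul_le_of_mul_sq_le_mul (norm_nonneg _) (norm_nonneg _) hsq

theorem norm_le_of_saddle_point (a : V →L[ℝ] V →L[ℝ] ℝ) (b : V →L[ℝ] Q →L[ℝ] ℝ)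
    {α₀ : ℝ} (hα₀ : 0 < α₀) (hcoer : ∀ v : V, b v = 0 → α₀ * ‖v‖ ^ 2 ≤ a v v)
    {β : ℝ} (hβ : 0 < β) (hinfsup : ∀ q : Q, β * ‖q‖ ≤ ‖b.flip q‖)
    {x : V} {F : V →L[ℝ] ℝ} {G : Q →L[ℝ] ℝ}
    (hF : ∀ v : V, b v = 0 → a x v = F v) (hG : b x = G) :
    ‖x‖ ≤ ‖F‖ / α₀ + (1 + ‖a‖ / α₀) * (‖G‖ / β) := by
  obtain ⟨w, hw, hw_norm⟩ := exists_preimage_norm_le_div_of_inf_sup b hβ hinfsup G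
  set w₀ := x - w
  have hw₀ : b w₀ = 0 := by simp [w₀, hG, hw]
  have hw₀_norm : α₀ * ‖w₀‖ ≤ ‖F‖ + ‖a‖ * ‖w‖ := by
    refine mul_le_of_mul_sq_le_mul (by positivity) (norm_nonneg _) ?_
    calc α₀ * ‖w₀‖ ^ 2 ≤ a w₀ w₀ := hcoer w₀ hw₀
      _ = F w₀ - a w w₀ := by rw [← hF w₀ hw₀]; simp [w₀]
      _ ≤ (‖F‖ + ‖a‖ * ‖w‖) * ‖w₀‖ := by
        have hFw₀ := (le_norm_self _).trans (F.le_opNorm w₀)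
        have haw := (neg_le_abs _).trans (a.le_opNorm₂ w w₀)
        linarith
  calc ‖x‖ = ‖w₀ + w‖ := by simp [w₀]
    _ ≤ ‖w₀‖ + ‖w‖ := norm_add_le _ _
    _ ≤ (‖F‖ + ‖a‖ * ‖w‖) / α₀ + ‖w‖ := by gcongr; rwa [le_div_iff₀' hα₀]
    _ = ‖F‖ / α₀ + (1 + ‖a‖ / α₀) * ‖w‖ := by field_simp; ring
    _ ≤ ‖F‖ / α₀ + (1 + ‖a‖ / α₀) * (‖G‖ / β) := by gcongr

theorem continuousOn_Icc_of_continuousOn_triangle {k : ℝ → ℝ → ℝ} {T t : ℝ}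
    (hk : ContinuousOn (fun ts : ℝ × ℝ => k ts.1 ts.2)
      {ts : ℝ × ℝ | 0 ≤ ts.2 ∧ ts.2 ≤ ts.1 ∧ ts.1 ≤ T}) (ht : t ≤ T) :
    ContinuousOn (k t) (Icc 0 t) :=
  hk.comp (continuous_const.prodMk continuous_id).continuousOn fun _ hs => ⟨hs.1, hs.2, ht⟩

section Volterra

variable {E : Type*} [NormedAddCommGroup E] [NormedSpace ℝ E] {k : ℝ → ℝ} {u : ℝ → E} {a b : ℝ}

theorem intervalIntegrable_smul_of_continuousOn (hab : a ≤ b) (hk : ContinuousOn k (Icc a b))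
    (hu : IntegrableOn u (Icc a b)) : IntervalIntegrable (fun s => k s • u s) volume a b :=
  (intervalIntegrable_iff_integrableOn_Icc_of_le hab).2 (hu.continuousOn_smul hk isCompact_Icc)

theorem norm_intervalIntegral_smul_le {C : ℝ} (hab : a ≤ b) (hk : ∀ s ∈ Ioc a b, |k s| ≤ C)
    (hu : IntervalIntegrable u volume a b) :
    ‖∫ s in a..b, k s • u s‖ ≤ C * ∫ s in a..b, ‖u s‖ := by
  rw [← intervalIntegral.integral_const_mul]
  refine intervalIntegral.norm_integral_le_of_norm_le hab (ae_of_all _ fun s hs => ?_)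
    (hu.norm.const_mul C)
  rw [norm_smul, Real.norm_eq_abs]
  exact mul_le_mul_of_nonneg_right (hk s hs) (norm_nonneg _)

theorem ContinuousLinearMap.intervalIntegral_smul_apply₂ [CompleteSpace E] {F : Type*}
    [NormedAddCommGroup F] [NormedSpace ℝ F] (B : E →L[ℝ] F →L[ℝ] ℝ) (y : F)
    (h : IntervalIntegrable (fun s => k s • u s) volume a b) :
    B (∫ s in a..b, k s • u s) y = ∫ s in a..b, k s * B (u s) y := by
  simpa using ((B.flip y).intervalIntegral_comp_comm h).symm

end Volterra

theorem mixed_volterra_pointwise_integral_inequality_general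
    (T : ℝ)
    (a : V →L[ℝ] V →L[ℝ] ℝ) (b : V →L[ℝ] Q →L[ℝ] ℝ)
    (α₀ : ℝ) (hα₀ : 0 < α₀)
    (hcoer : ∀ v : V, b v = 0 → α₀ * ‖v‖ ^ 2 ≤ a v v)
    (β : ℝ) (hβ : 0 < β)
    (hinfsup : ∀ q : Q, β * ‖q‖ ≤ ‖b.flip q‖)
    (k₁ k₂ k₃ : ℝ → ℝ → ℝ)
    (hk₁c : ContinuousOn (fun ts : ℝ × ℝ => k₁ ts.1 ts.2)
      {ts : ℝ × ℝ | 0 ≤ ts.2 ∧ ts.2 ≤ ts.1 ∧ ts.1 ≤ T})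
    (hk₃c : ContinuousOn (fun ts : ℝ × ℝ => k₃ ts.1 ts.2)
      {ts : ℝ × ℝ | 0 ≤ ts.2 ∧ ts.2 ≤ ts.1 ∧ ts.1 ≤ T})
    (Ck₃ : ℝ)
    (hk₃b : ∀ t s : ℝ, 0 ≤ s → s ≤ t → t ≤ T → |k₃ t s| ≤ Ck₃)
    (Ckt : ℝ)
    (hktb : ∀ t s : ℝ, 0 ≤ s → s ≤ t → t ≤ T → |k₁ t s - k₃ t s| ≤ Ckt)
    (f : ℝ → V →L[ℝ] ℝ) (g : ℝ → Q →L[ℝ] ℝ)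
    (u : ℝ → V) (p : ℝ → Q)
    (hu : IntegrableOn u (Icc 0 T))
    (hsol : MixedVolterraSol T a b k₁ k₂ k₃ f g u p)
    :
    ∀ᵐ t ∂(volume.restrict (Icc (0:ℝ) T)),
      ‖u t‖ ≤ (1 / α₀) * ‖f t‖ + (1 / β) * (1 + ‖a‖ / α₀) * ‖g t‖
        + ((‖a‖ / α₀) * Ckt + Ck₃) * ∫ s in (0:ℝ)..t, ‖u s‖ := by
  filter_upwards [hsol, ae_restrict_mem measurableSet_Icc] with t ⟨hau, hbu⟩ ⟨ht0, htT⟩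
  have hut : IntegrableOn u (Icc 0 t) := hu.mono_set (Icc_subset_Icc_right htT)
  have hK₁ := intervalIntegrable_smul_of_continuousOn ht0
    (continuousOn_Icc_of_continuousOn_triangle hk₁c htT) hut
  have hK₃ := intervalIntegrable_smul_of_continuousOn ht0
    (continuousOn_Icc_of_continuousOn_triangle hk₃c htT) hut
  have huI := (intervalIntegrable_iff_integrableOn_Icc_of_le ht0).2 hut
  set K₁ := ∫ s in (0:ℝ)..t, k₁ t s • u s
  set K₃ := ∫ s in (0:ℝ)..t, k₃ t s • u s
  have hF : ∀ v, b v = 0 → a (u t - K₃) v = (f t + a (K₁ - K₃)) v := fun v hv => by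
    have hau_v := hau v
    simp only [hv, zero_apply, mul_zero, add_zero] at hau_v
    rw [map_sub, sub_apply, hau_v, map_sub, add_apply, sub_apply,
      a.intervalIntegral_smul_apply₂ v hK₁]
    ring
  have hG : b (u t - K₃) = g t := ContinuousLinearMap.ext fun q => by
    rw [map_sub, sub_apply, hbu q, b.intervalIntegral_smul_apply₂ q hK₃, add_sub_cancel_right]
  have hK₁₃ : ‖K₁ - K₃‖ ≤ Ckt * ∫ s in (0:ℝ)..t, ‖u s‖ := by
    rw [← intervalIntegral.integral_sub hK₁ hK₃]
    simp_rw [← sub_smul]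
    exact norm_intervalIntegral_smul_le ht0 (fun s hs => hktb t s hs.1.le hs.2 htT) huI
  have hK₃_norm : ‖K₃‖ ≤ Ck₃ * ∫ s in (0:ℝ)..t, ‖u s‖ :=
    norm_intervalIntegral_smul_le ht0 (fun s hs => hk₃b t s hs.1.le hs.2 htT) huI
  have hF_norm : ‖f t + a (K₁ - K₃)‖ ≤ ‖f t‖ + ‖a‖ * (Ckt * ∫ s in (0:ℝ)..t, ‖u s‖) :=
    (norm_add_le _ _).trans (by gcongr; exact (a.le_opNorm _).trans (by gcongr))
  have hsaddle := norm_le_of_saddle_point a b hα₀ hcoer hβ hinfsup hF hG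
  calc ‖u t‖ ≤ ‖u t - K₃‖ + ‖K₃‖ := norm_le_norm_sub_add _ _
    _ ≤ (‖f t‖ + ‖a‖ * (Ckt * ∫ s in (0:ℝ)..t, ‖u s‖)) / α₀ + (1 + ‖a‖ / α₀) * (‖g t‖ / β)
        + Ck₃ * ∫ s in (0:ℝ)..t, ‖u s‖ := by gcongr; exact hsaddle.trans (by gcongr)
    _ = _ := by ring

theorem mixed_volterra_pointwise_integral_inequality
    (T : ℝ) (hT : 0 ≤ T)
    (a : V →L[ℝ] V →L[ℝ] ℝ) (b : V →L[ℝ] Q →L[ℝ] ℝ)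
    (hsym : ∀ v w : V, a v w = a w v)
    (α₀ : ℝ) (hα₀ : 0 < α₀)
    (hcoer : ∀ v : V, b v = 0 → α₀ * ‖v‖ ^ 2 ≤ a v v)
    (β : ℝ) (hβ : 0 < β)
    (hinfsup : ∀ q : Q, β * ‖q‖ ≤ ‖b.flip q‖)
    (k₁ k₂ k₃ : ℝ → ℝ → ℝ)
    (hk₁c : ContinuousOn (fun ts : ℝ × ℝ => k₁ ts.1 ts.2)
      {ts : ℝ × ℝ | 0 ≤ ts.2 ∧ ts.2 ≤ ts.1 ∧ ts.1 ≤ T})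
    (hk₂c : ContinuousOn (fun ts : ℝ × ℝ => k₂ ts.1 ts.2)
      {ts : ℝ × ℝ | 0 ≤ ts.2 ∧ ts.2 ≤ ts.1 ∧ ts.1 ≤ T})
    (hk₃c : ContinuousOn (fun ts : ℝ × ℝ => k₃ ts.1 ts.2)
      {ts : ℝ × ℝ | 0 ≤ ts.2 ∧ ts.2 ≤ ts.1 ∧ ts.1 ≤ T})
    (Ck₁ Ck₂ Ck₃ : ℝ) (hCk₁ : 0 ≤ Ck₁) (hCk₂ : 0 ≤ Ck₂) (hCk₃ : 0 ≤ Ck₃)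
    (hk₁b : ∀ t s : ℝ, 0 ≤ s → s ≤ t → t ≤ T → |k₁ t s| ≤ Ck₁)
    (hk₂b : ∀ t s : ℝ, 0 ≤ s → s ≤ t → t ≤ T → |k₂ t s| ≤ Ck₂)
    (hk₃b : ∀ t s : ℝ, 0 ≤ s → s ≤ t → t ≤ T → |k₃ t s| ≤ Ck₃)
    (Ckt : ℝ) (hCkt : 0 ≤ Ckt)
    (hktb : ∀ t s : ℝ, 0 ≤ s → s ≤ t → t ≤ T → |k₁ t s - k₃ t s| ≤ Ckt)
    (f : ℝ → V →L[ℝ] ℝ) (g : ℝ → Q →L[ℝ] ℝ)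
    (hf : IntegrableOn f (Icc 0 T)) (hg : IntegrableOn g (Icc 0 T))
    (u : ℝ → V) (p : ℝ → Q)
    (hu : IntegrableOn u (Icc 0 T)) (hp : IntegrableOn p (Icc 0 T))
    (hsol : MixedVolterraSol T a b k₁ k₂ k₃ f g u p)
    :
    ∀ᵐ t ∂(volume.restrict (Icc (0:ℝ) T)),
      ‖u t‖ ≤ (1 / α₀) * ‖f t‖ + (1 / β) * (1 + ‖a‖ / α₀) * ‖g t‖
        + ((‖a‖ / α₀) * Ckt + Ck₃) * ∫ s in (0:ℝ)..t, ‖u s‖ :=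
  mixed_volterra_pointwise_integral_inequality_general T a b α₀ hα₀ hcoer β hβ hinfsup k₁ k₂ k₃ hk₁c
    hk₃c Ck₃ hk₃b Ckt hktb f g u p hu hsol
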